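/- arXiv:2306.12653 — 4 statements merged into one kernel-verified Lean document; each statement's English description precedes it below -/
import Mathlib

section
/- Let r ≥ 12 be an even integer. Then there exists an integer d₁' with 2 ≤ d₁' ≤ r/2 − 3 such that gcd(2d₁'+1, r−1) = 1. -/
/-- For every even `r ≥ 12` there is `d₁'` with `2 ≤ d₁' ≤ r/2 - 3` and
`gcd (2d₁'+1) (r-1) = 1`. -/
theorem stmt3 (r : ℕ) (hr : 12 ≤ r) (hre : Even r) :
    ∃ d₁' : ℕ, 2 ≤ d₁' ∧ d₁' ≤ r / 2 - 3 ∧ Nat.gcd (2 * d₁' + 1) (r - 1) = 1 := by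
  obtain ⟨k, hk⟩ := hre
  refine ⟨r / 2 - 3, by omega, le_refl _, ?_⟩
  have hd : 2 * (r / 2 - 3) + 1 = r - 5 := by omega
  rw [hd]
  set g := Nat.gcd (r - 5) (r - 1) with hg
  have h1 : g ∣ r - 5 := Nat.gcd_dvd_left _ _
  have h2 : g ∣ r - 1 := Nat.gcd_dvd_right _ _
  have h3 : g ∣ 4 := by
    have := Nat.dvd_sub h2 h1
    have h4 : r - 1 - (r - 5) = 4 := by omega
    rwa [h4] at this
  have hle : g ≤ 4 := Nat.le_of_dvd (by norm_num) h3
  have hpos : 1 ≤ g := Nat.gcd_pos_of_pos_left _ (by omega)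
  obtain ⟨a, ha⟩ := h1
  interval_cases g <;> omega
end

section
/- Suppose (d₀, g₀, r) satisfies the property P, and P is preserved under the two operations (d,g) ↦ (d+(r−1)², g+r(r−1)) and (d,g) ↦ (d+a, g+b) whenever a+b = c(r−1) with b ≤ min(a, C(c,2)) for some nonnegative integer c. Let q, b ≥ 0 be integers and a the minimal positive integer such that a+b = c(r−1) for some c with b ≤ min(a, C(c,2)). Then for g = g₀ + q·r(r−1) + b and any d ≥ d₀ + a + q(r−1)², the pair (d, g) is obtainable from some (d', g₀) with d' ≥ d₀ by these operations. -/
/-- Reachability by the two degeneration operations used in the paper: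
`(d,g) ↦ (d + (r-1)², g + r(r-1))` and `(d,g) ↦ (d + a, g + b)` whenever
`a + b = c(r-1)` with `b ≤ min(a, C(c,2))` for some nonnegative integer `c`. -/
inductive Reach (r : ℤ) : ℤ × ℤ → ℤ × ℤ → Prop
  | refl (p : ℤ × ℤ) : Reach r p p
  | op1 (p : ℤ × ℤ) (d g : ℤ) : Reach r p (d, g) →
      Reach r p (d + (r - 1) ^ 2, g + r * (r - 1))
  | op2 (p : ℤ × ℤ) (d g a b c : ℤ) : Reach r p (d, g) →
      0 < a → 0 ≤ b → 0 ≤ c → a + b = c * (r - 1) → b ≤ a → 2 * b ≤ c * (c - 1) →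
      Reach r p (d + a, g + b)

/-- Lemma 5.3 (combinatorial content): with `q, b ≥ 0` and `a` the minimal positive
integer admitting `c ≥ 0` with `a + b = c(r-1)`, `b ≤ a` and `b ≤ C(c,2)`, every pair
`(d, g)` with `g = g₀ + q r(r-1) + b` and `d ≥ d₀ + a + q(r-1)²` is reachable from
some `(d', g₀)` with `d' ≥ d₀` by the two operations. -/
theorem stmt10 (r d₀ g₀ q b a d g : ℤ) (hr : 3 ≤ r) (hq : 0 ≤ q) (hb : 0 ≤ b)
    (ha : IsLeast {a' : ℤ | 0 < a' ∧ ∃ c : ℤ, 0 ≤ c ∧ a' + b = c * (r - 1) ∧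
      b ≤ a' ∧ 2 * b ≤ c * (c - 1)} a)
    (hg : g = g₀ + q * r * (r - 1) + b)
    (hd : d₀ + a + q * (r - 1) ^ 2 ≤ d) :
    ∃ d' : ℤ, d₀ ≤ d' ∧ Reach r (d', g₀) (d, g) := by
  subst hg
  obtain ⟨⟨hapos, c, hc0, hsum, hba, hbc⟩, _⟩ := ha
  refine ⟨d - a - q * (r - 1) ^ 2, by linarith, ?_⟩
  have h1 : Reach r (d - a - q * (r - 1) ^ 2, g₀)
      (d - a - q * (r - 1) ^ 2 + a, g₀ + b) :=
    Reach.op2 _ _ _ a b c (Reach.refl _) hapos hb hc0 hsum hba hbc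
  have key : ∀ n : ℕ, Reach r (d - a - q * (r - 1) ^ 2, g₀)
      (d - a - q * (r - 1) ^ 2 + a + n * (r - 1) ^ 2, g₀ + b + n * (r * (r - 1))) := by
    intro n
    induction n with
    | zero => simpa using h1
    | succ k ih =>
        have := Reach.op1 _ _ _ ih
        convert this using 2 <;> push_cast <;> ring
  have hq' : (q.toNat : ℤ) = q := Int.toNat_of_nonneg hq
  have := key q.toNat
  rw [hq'] at this
  convert this using 2 <;> ring
end

section
/- Let r ≥ 3 and b be a positive integer. Let c be the integer with C(c−1,2) + 1 ≤ b ≤ C(c,2), and let a_b be the least positive integer with a_b ≥ b, a_b + b divisible by r−1, and b ≤ min(a_b, C(c',2)) where c' = (a_b+b)/(r−1). Then a_b − b ≤ r²/4 + r − 3 and a_b ≤ b(2r−3). -/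
/-- Bounds on the minimal number of lines `a_b`: let `r ≥ 3`, `b ≥ 1`, `c` the
integer with `C(c-1,2) + 1 ≤ b ≤ C(c,2)`, and `a` the least positive integer with
`a ≥ b`, `(r-1) ∣ (a+b)`, and `b ≤ C(c',2)` where `c' = (a+b)/(r-1)`.  Then
`a - b ≤ r²/4 + r - 3` and `a ≤ b(2r-3)`. -/
theorem stmt11 (r b c a : ℤ) (hr : 3 ≤ r) (hb : 1 ≤ b) (hc : 1 ≤ c)
    (hc1 : (c - 1) * (c - 2) < 2 * b) (hc2 : 2 * b ≤ c * (c - 1))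
    (ha : IsLeast {a' : ℤ | 0 < a' ∧ b ≤ a' ∧ ∃ c' : ℤ,
      a' + b = c' * (r - 1) ∧ 2 * b ≤ c' * (c' - 1)} a) :
    4 * (a - b) ≤ r ^ 2 + 4 * r - 12 ∧ a ≤ b * (2 * r - 3) := by
  obtain ⟨_, hleast⟩ := ha
  obtain ⟨t, ht⟩ := Int.even_mul_succ_self (c - 2)
  have hpar : (c - 1) * (c - 2) + 2 ≤ 2 * b := by
    have h2 : (c - 1) * (c - 2) = t + t := by linear_combination ht
    omega
  have hr1 : (0:ℤ) < r - 1 := by omega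
  set k : ℤ := (2 * b + r - 2) / (r - 1) with hk
  have hdm := Int.mul_ediv_add_emod (2 * b + r - 2) (r - 1)
  have hm0 : 0 ≤ (2 * b + r - 2) % (r - 1) := Int.emod_nonneg _ (by omega)
  have hm1 : (2 * b + r - 2) % (r - 1) < r - 1 := Int.emod_lt_of_pos _ hr1
  have hk1 : 2 * b ≤ k * (r - 1) := by nlinarith [hdm]
  have hk2 : (k - 1) * (r - 1) < 2 * b := by nlinarith [hdm]
  set c' : ℤ := max c k with hc'
  have hcc : c ≤ c' := le_max_left _ _
  have hkc : k ≤ c' := le_max_right _ _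
  have hmem : c' * (r - 1) - b ∈ {a' : ℤ | 0 < a' ∧ b ≤ a' ∧ ∃ c' : ℤ,
      a' + b = c' * (r - 1) ∧ 2 * b ≤ c' * (c' - 1)} := by
    have hge : 2 * b ≤ c' * (r - 1) := le_trans hk1 (by nlinarith)
    refine ⟨by linarith, by linarith, c', by ring, ?_⟩
    nlinarith [hc2, hcc, hc]
  have hle := hleast hmem
  rcases max_choice c k with h | h
  · rw [hc', h] at hle
    have hc2b : c ≤ 2 * b := by nlinarith [sq_nonneg (c - 2)]
    constructor
    · nlinarith [sq_nonneg (2 * c - r - 2)]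
    · nlinarith
  · rw [hc', h] at hle
    constructor
    · nlinarith
    · nlinarith
end

section
/- Let r ≥ 4, d₀ ≥ r+1, g₀ ≥ 0 with ρ₀ = ρ(d₀,g₀,r) = g₀ − (r+1)(g₀−d₀+r) ≥ 0, and set q₀ = ⌈(2ρ₀ + 5r² − 7r − 2)/(2(r−1))⌉. Suppose g ≥ g₀ + C(r−1,2) + q₀·r(r−1) + 1 and write g = g₀ + q·r(r−1) + b with C(r−1,2)+1 ≤ b ≤ C(r−1,2) + r(r−1) (so q ≥ q₀). Let a be the minimal integer with a ≥ b and (r−1) | (a+b). Then ρ(d − q(r−1)² − a, g₀, r) ≥ ρ(d, g, r) + q₀(r−1) − (5r²−7r−2)/2 ≥ ρ₀. -/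
/-- Arithmetic heart of Lemma 5.4.  Here `ρ(d,g,r) = g - (r+1)(g - d + r)`,
`ρ₀ = ρ(d₀,g₀,r) ≥ 0`, `q₀ = ⌈(2ρ₀ + 5r² - 7r - 2)/(2(r-1))⌉` (characterized by
the two inequalities below), `g = g₀ + q r(r-1) + b` with
`C(r-1,2)+1 ≤ b ≤ C(r-1,2) + r(r-1)` (stated via `2b`), and `a` the minimal
integer with `a ≥ b` and `(r-1) ∣ (a+b)`.  Then
`ρ(d - q(r-1)² - a, g₀, r) ≥ ρ(d,g,r) + q₀(r-1) - (5r²-7r-2)/2 ≥ ρ₀`. -/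
theorem stmt18 (r d₀ g₀ q₀ d g q b a : ℤ) (hr : 4 ≤ r) (hd₀ : r + 1 ≤ d₀)
    (hg₀ : 0 ≤ g₀) (hρ₀ : 0 ≤ g₀ - (r + 1) * (g₀ - d₀ + r))
    (hq₀1 : 2 * (r - 1) * (q₀ - 1) < 2 * (g₀ - (r + 1) * (g₀ - d₀ + r)) + 5 * r ^ 2 - 7 * r - 2)
    (hq₀2 : 2 * (g₀ - (r + 1) * (g₀ - d₀ + r)) + 5 * r ^ 2 - 7 * r - 2 ≤ 2 * (r - 1) * q₀)
    (hglarge : 2 * g₀ + (r - 1) * (r - 2) + 2 * q₀ * r * (r - 1) + 2 ≤ 2 * g)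
    (hg : g = g₀ + q * r * (r - 1) + b)
    (hb1 : (r - 1) * (r - 2) + 2 ≤ 2 * b)
    (hb2 : 2 * b ≤ (r - 1) * (r - 2) + 2 * r * (r - 1))
    (ha : IsLeast {a' : ℤ | b ≤ a' ∧ (r - 1) ∣ (a' + b)} a)
    (hBN : 0 ≤ g - (r + 1) * (g - d + r)) :
    2 * (g₀ - (r + 1) * (g₀ - (d - q * (r - 1) ^ 2 - a) + r))
        ≥ 2 * (g - (r + 1) * (g - d + r)) + 2 * q₀ * (r - 1) - (5 * r ^ 2 - 7 * r - 2) ∧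
      g₀ - (r + 1) * (g₀ - (d - q * (r - 1) ^ 2 - a) + r)
        ≥ g₀ - (r + 1) * (g₀ - d₀ + r) := by

  have hr1 : (0:ℤ) < r - 1 := by linarith
  -- bound a ≤ b + (r-2)
  set k := (-(2*b)) % (r-1) with hk
  have hk0 : 0 ≤ k := Int.emod_nonneg _ (by linarith)
  have hk1 : k < r - 1 := Int.emod_lt_of_pos _ hr1
  have hdvd : (r - 1) ∣ ((b + k) + b) := by
    refine ⟨-((-(2*b)) / (r-1)), ?_⟩
    have := Int.emod_add_mul_ediv (-(2*b)) (r-1)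
    rw [hk]; linarith
  have hab : a ≤ b + k := ha.2 ⟨by linarith, hdvd⟩
  have hba : b ≤ a := ha.1.1
  have ha2 : a ≤ b + (r - 2) := by linarith
  have hq : q₀ ≤ q := by nlinarith [mul_pos (by linarith : (0:ℤ) < r) hr1]
  constructor
  · nlinarith [mul_le_mul_of_nonneg_right hq (by linarith : (0:ℤ) ≤ r - 1),
      mul_le_mul_of_nonneg_left ha2 (by linarith : (0:ℤ) ≤ 2*(r+1))]
  · nlinarith [mul_le_mul_of_nonneg_right hq (by linarith : (0:ℤ) ≤ r - 1),
      mul_le_mul_of_nonneg_left ha2 (by linarith : (0:ℤ) ≤ 2*(r+1))]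
end
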